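/- Let z ∈ ℂ and suppose sup_{n≥0} ‖D_n‖ < ∞. Let F = (F_n)_{n≥0} be a matrix solution of the eigenvalue equation at z with F_0 = I and Σ_{n≥0} ‖F_n‖_F² < ∞, and set M := −F_1 D_0^{-1}. Then D_0 · Im[M] · D_0 = Im(z) · Σ_{k=1}^{∞} F_k* F_k, where Im[M] := (M − M*)/(2i) and the series on the right converges. -/

import Mathlib

open Matrix

noncomputable section

/-- The complexification of a real matrix. -/
def cmat {l : ℕ} (A : Matrix (Fin l) (Fin l) ℝ) : Matrix (Fin l) (Fin l) ℂ :=
  A.map (Complex.ofReal)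

/-- The operator norm of a real `l×l` matrix. -/
def opNorm {l : ℕ} (A : Matrix (Fin l) (Fin l) ℝ) : ℝ :=
  ‖Matrix.toEuclideanCLM (𝕜 := ℝ) (n := Fin l) A‖

/-- The Frobenius norm of a complex `l×l` matrix: `‖A‖_F = sqrt(tr(A*A))`. -/
def frob {l : ℕ} (A : Matrix (Fin l) (Fin l) ℂ) : ℝ :=
  Real.sqrt ((Aᴴ * A).trace.re)

/-- `U` is a matrix solution of the eigenvalue equation at `w`. -/
def IsMatSol {l : ℕ} (D V : ℕ → Matrix (Fin l) (Fin l) ℝ) (w : ℂ)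
    (U : ℕ → Matrix (Fin l) (Fin l) ℂ) : Prop :=
  ∀ n : ℕ, 1 ≤ n →
    cmat (D n) * U (n + 1) + cmat (D (n - 1)) * U (n - 1) + cmat (V n) * U n = w • U n

/-!
The matrices `W n = F nᴴ D n F (n+1) - F (n+1)ᴴ D n F n` form a discrete Wronskian. Multiplying the
recurrence at `n + 1` on the left by `F (n + 1)ᴴ` and subtracting the adjoint gives
`W (n + 1) - W n = (z - z̄) F (n + 1)ᴴ F (n + 1)`, because `D` and `V` are symmetric.
Square summability makes `∑ F (k + 1)ᴴ F (k + 1)` converge and forces `F n → 0`, so `W n → 0`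
as `D` is bounded. Telescoping, `(z - z̄) ∑ = -W 0 = F 1ᴴ D 0 - D 0 F 1`, which is
`2 i D 0 Im[M] D 0` because `D 0` is invertible.
-/

open Filter Topology

theorem isHermitian_cmat {l : ℕ} {A : Matrix (Fin l) (Fin l) ℝ} (hA : A.IsSymm) :
    (cmat A).IsHermitian := by
  ext i j
  simp [cmat, hA.apply i j]

theorem abs_apply_le_opNorm {l : ℕ} (A : Matrix (Fin l) (Fin l) ℝ) (i j : Fin l) :
    |A i j| ≤ opNorm A := by
  have h := (toEuclideanCLM (n := Fin l) (𝕜 := ℝ) A).le_opNorm (PiLp.single 2 j (1 : ℝ))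
  rw [PiLp.norm_single, norm_one, mul_one] at h
  calc |A i j| = ‖toEuclideanCLM (n := Fin l) (𝕜 := ℝ) A (PiLp.single 2 j (1 : ℝ)) i‖ := by
        simp [Matrix.mulVec_single]
    _ ≤ opNorm A := (PiLp.norm_apply_le _ i).trans h

theorem frob_sq {l : ℕ} (A : Matrix (Fin l) (Fin l) ℂ) : frob A ^ 2 = ∑ i, ∑ j, ‖A i j‖ ^ 2 := by
  have h : (Aᴴ * A).trace.re = ∑ i, ∑ j, ‖A i j‖ ^ 2 := by
    simp only [trace, diag, mul_apply, conjTranspose_apply, Complex.re_sum]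
    rw [Finset.sum_comm]
    simp [Complex.conj_mul', ← Complex.ofReal_pow]
  rw [frob, h, Real.sq_sqrt (by positivity)]

theorem frob_cmat_le {l : ℕ} (A : Matrix (Fin l) (Fin l) ℝ) : frob (cmat A) ≤ l * opNorm A := by
  have hA : 0 ≤ opNorm A := norm_nonneg _
  refine (pow_le_pow_iff_left₀ (Real.sqrt_nonneg _) (by positivity) two_ne_zero).1 ?_
  calc frob (cmat A) ^ 2 = ∑ i, ∑ j, |A i j| ^ 2 := by simp [frob_sq, cmat]
    _ ≤ ∑ _i : Fin l, ∑ _j : Fin l, opNorm A ^ 2 := by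
        gcongr with i _ j _
        exact abs_apply_le_opNorm A i j
    _ = (l * opNorm A) ^ 2 := by
        simp only [Finset.sum_const, Finset.card_univ, Fintype.card_fin, nsmul_eq_mul]; ring

section Frobenius

open scoped Matrix.Norms.Frobenius

theorem frob_eq_norm {l : ℕ} (A : Matrix (Fin l) (Fin l) ℂ) : frob A = ‖A‖ := by
  rw [← Real.sqrt_sq (show 0 ≤ frob A from Real.sqrt_nonneg _), frob_sq, frobenius_norm_def,
    ← Real.sqrt_eq_rpow]
  simp_rw [Real.rpow_two]

theorem tendsto_zero_of_summable_frob_sq {l : ℕ} {F : ℕ → Matrix (Fin l) (Fin l) ℂ}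
    (hF : Summable fun n => frob (F n) ^ 2) : Tendsto F atTop (𝓝 0) := by
  have h := hF.tendsto_atTop_zero.sqrt.congr fun n =>
    Real.sqrt_sq (show 0 ≤ frob (F n) from Real.sqrt_nonneg _)
  rw [Real.sqrt_zero] at h
  simp only [frob_eq_norm] at h
  exact tendsto_zero_iff_norm_tendsto_zero.2 h

theorem summable_conjTranspose_mul_self {l : ℕ} {F : ℕ → Matrix (Fin l) (Fin l) ℂ}
    (hF : Summable fun n => frob (F n) ^ 2) : Summable fun n => (F n)ᴴ * F n := by
  refine .of_norm_bounded hF fun n => ?_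
  calc ‖(F n)ᴴ * F n‖ ≤ ‖(F n)ᴴ‖ * ‖F n‖ := norm_mul_le _ _
    _ = frob (F n) ^ 2 := by rw [frobenius_norm_conjTranspose, frob_eq_norm, sq]

theorem tendsto_conjTranspose_mul_mul_zero {l : ℕ} {A B : ℕ → Matrix (Fin l) (Fin l) ℂ}
    {D : ℕ → Matrix (Fin l) (Fin l) ℝ} (hD : ∃ C, ∀ n, opNorm (D n) ≤ C)
    (hA : Tendsto A atTop (𝓝 0)) (hB : Tendsto B atTop (𝓝 0)) :
    Tendsto (fun n => (A n)ᴴ * cmat (D n) * B n) atTop (𝓝 0) := by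
  obtain ⟨C, hC⟩ := hD
  have hAH : Tendsto (fun n => (A n)ᴴ) atTop (𝓝 0) := by
    have := hA.star
    rwa [star_zero] at this
  have hDbdd : IsBoundedUnder (· ≤ ·) atTop fun n => ‖cmat (D n)‖ :=
    isBoundedUnder_of ⟨l * C, fun n => by
      rw [← frob_eq_norm]
      exact (frob_cmat_le _).trans (by gcongr; exact hC n)⟩
  have := (hAH.zero_mul_isBoundedUnder_le hDbdd).mul hB
  rwa [zero_mul] at this

end Frobenius

def wronskian {l : ℕ} (D : ℕ → Matrix (Fin l) (Fin l) ℝ) (F : ℕ → Matrix (Fin l) (Fin l) ℂ)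
    (n : ℕ) : Matrix (Fin l) (Fin l) ℂ :=
  (F n)ᴴ * cmat (D n) * F (n + 1) - (F (n + 1))ᴴ * cmat (D n) * F n

section Wronskian

variable {l : ℕ} {D V : ℕ → Matrix (Fin l) (Fin l) ℝ} {z : ℂ} {F : ℕ → Matrix (Fin l) (Fin l) ℂ}

theorem wronskian_succ (hD : ∀ n, (D n).IsSymm) (hV : ∀ n, (V n).IsSymm) (hF : IsMatSol D V z F)
    (n : ℕ) :
    wronskian D F (n + 1)
      = wronskian D F n + (z - starRingEnd ℂ z) • ((F (n + 1))ᴴ * F (n + 1)) := by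
  set G := F (n + 1)
  set R := cmat (D (n + 1)) * F (n + 2) + cmat (D n) * F n + cmat (V (n + 1)) * G
  have hR : R = z • G := by simpa using hF (n + 1) n.succ_pos
  have hR' : Gᴴ * R - Rᴴ * G = wronskian D F (n + 1) - wronskian D F n := by
    simp only [R, wronskian, conjTranspose_add, conjTranspose_mul, (isHermitian_cmat (hD _)).eq,
      (isHermitian_cmat (hV _)).eq, Matrix.mul_add, Matrix.add_mul, mul_assoc]
    abel
  rw [← sub_eq_iff_eq_add', ← hR', hR]
  simp only [conjTranspose_smul, Matrix.mul_smul, Matrix.smul_mul, sub_smul, starRingEnd_apply]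

theorem smul_sum_range_eq_wronskian_sub (hD : ∀ n, (D n).IsSymm) (hV : ∀ n, (V n).IsSymm)
    (hF : IsMatSol D V z F) (N : ℕ) :
    (z - starRingEnd ℂ z) • ∑ k ∈ Finset.range N, (F (k + 1))ᴴ * F (k + 1)
      = wronskian D F N - wronskian D F 0 := by
  rw [Finset.smul_sum, ← Finset.sum_range_sub]
  simp only [wronskian_succ hD hV hF, add_sub_cancel_left]

theorem smul_tsum_eq_neg_wronskian_zero (hD : ∀ n, (D n).IsSymm) (hV : ∀ n, (V n).IsSymm)
    (hF : IsMatSol D V z F) (hsum : Summable fun k => (F (k + 1))ᴴ * F (k + 1))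
    (hW : Tendsto (wronskian D F) atTop (𝓝 0)) :
    (z - starRingEnd ℂ z) • ∑' k, (F (k + 1))ᴴ * F (k + 1) = -wronskian D F 0 := by
  refine tendsto_nhds_unique ((hsum.hasSum.tendsto_sum_nat).const_smul _) ?_
  simp_rw [smul_sum_range_eq_wronskian_sub hD hV hF]
  simpa using hW.sub_const (wronskian D F 0)

end Wronskian

theorem isUnit_det_cmat {l : ℕ} {A : Matrix (Fin l) (Fin l) ℝ} (hA : IsUnit A.det) :
    IsUnit (cmat A).det := by
  rw [show cmat A = Complex.ofRealHom.mapMatrix A from rfl, ← RingHom.map_det]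
  exact hA.map Complex.ofRealHom

theorem mul_neg_mul_inv_sub_conjTranspose_mul {n : Type*} [Fintype n] [DecidableEq n]
    {D : Matrix n n ℂ} (hD : D.IsHermitian) (hdet : IsUnit D.det) (A : Matrix n n ℂ) :
    D * (-A * D⁻¹ - (-A * D⁻¹)ᴴ) * D = Aᴴ * D - D * A := by
  rw [conjTranspose_mul, conjTranspose_nonsing_inv, hD.eq, conjTranspose_neg]
  simp only [Matrix.mul_sub, Matrix.sub_mul, Matrix.neg_mul, Matrix.mul_neg, mul_assoc,
    nonsing_inv_mul _ hdet, mul_one]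
  rw [← mul_assoc D D⁻¹, mul_nonsing_inv _ hdet, one_mul]
  abel

theorem inv_two_mul_I_mul_sub_conj (z : ℂ) :
    (2 * Complex.I)⁻¹ * (z - starRingEnd ℂ z) = z.im := by
  rw [Complex.sub_conj]
  field_simp
  push_cast
  ring

theorem D0_imM_D0_eq_general (l : ℕ)
    (D V : ℕ → Matrix (Fin l) (Fin l) ℝ)
    (hDsymm : ∀ n, (D n).IsSymm) (hVsymm : ∀ n, (V n).IsSymm)
    (hDinv : ∀ n, IsUnit (D n).det)
    (hDbdd : ∃ C : ℝ, ∀ n, opNorm (D n) ≤ C)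
    (z : ℂ) (F : ℕ → Matrix (Fin l) (Fin l) ℂ)
    (hF : IsMatSol D V z F) (hF0 : F 0 = 1)
    (hFl2 : Summable (fun n : ℕ => frob (F n) ^ 2)) :
    Summable (fun k : ℕ => (F (k + 1))ᴴ * F (k + 1)) ∧
      cmat (D 0) * ((2 * Complex.I)⁻¹ • (-(F 1) * (cmat (D 0))⁻¹
            - (-(F 1) * (cmat (D 0))⁻¹)ᴴ)) * cmat (D 0)
        = (z.im : ℂ) • ∑' k : ℕ, (F (k + 1))ᴴ * F (k + 1) := by
  have hsum : Summable fun k => (F (k + 1))ᴴ * F (k + 1) :=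
    (summable_nat_add_iff 1).2 (summable_conjTranspose_mul_self hFl2)
  refine ⟨hsum, ?_⟩
  have hFlim := tendsto_zero_of_summable_frob_sq hFl2
  have hFlim' := hFlim.comp (tendsto_add_atTop_nat 1)
  have hW : Tendsto (wronskian D F) atTop (𝓝 0) := by
    have h := (tendsto_conjTranspose_mul_mul_zero hDbdd hFlim hFlim').sub
      (tendsto_conjTranspose_mul_mul_zero hDbdd hFlim' hFlim)
    rwa [sub_zero] at h
  have hW0 : wronskian D F 0 = cmat (D 0) * F 1 - (F 1)ᴴ * cmat (D 0) := by
    simp [wronskian, hF0]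
  rw [Matrix.mul_smul, Matrix.smul_mul, mul_neg_mul_inv_sub_conjTranspose_mul
    (isHermitian_cmat (hDsymm 0)) (isUnit_det_cmat (hDinv 0)), ← neg_sub, ← hW0,
    ← smul_tsum_eq_neg_wronskian_zero hDsymm hVsymm hF hsum hW, smul_smul,
    inv_two_mul_I_mul_sub_conj]

/-- `D_0 Im[M] D_0 = Im(z) Σ_{k≥1} F_k* F_k` for a square-summable matrix solution `F` at `z`
with `F_0 = I` and `M := −F_1 D_0^{-1}`; the series converges. -/
theorem D0_imM_D0_eq (l : ℕ) (hl : 1 ≤ l)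
    (D V : ℕ → Matrix (Fin l) (Fin l) ℝ)
    (hDsymm : ∀ n, (D n).IsSymm) (hVsymm : ∀ n, (V n).IsSymm)
    (hDinv : ∀ n, IsUnit (D n).det)
    (hDbdd : ∃ C : ℝ, ∀ n, opNorm (D n) ≤ C)
    (z : ℂ) (F : ℕ → Matrix (Fin l) (Fin l) ℂ)
    (hF : IsMatSol D V z F) (hF0 : F 0 = 1)
    (hFl2 : Summable (fun n : ℕ => frob (F n) ^ 2)) :
    Summable (fun k : ℕ => (F (k + 1))ᴴ * F (k + 1)) ∧
      cmat (D 0) * ((2 * Complex.I)⁻¹ • (-(F 1) * (cmat (D 0))⁻¹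
            - (-(F 1) * (cmat (D 0))⁻¹)ᴴ)) * cmat (D 0)
        = (z.im : ℂ) • ∑' k : ℕ, (F (k + 1))ᴴ * F (k + 1) :=
  D0_imM_D0_eq_general l D V hDsymm hVsymm hDinv hDbdd z F hF hF0 hFl2
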